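/- arXiv:1911.09140 — 2 statements merged into one kernel-verified Lean document; each statement's English description precedes it below -/
import Mathlib

section
/- Let s and t be finite index sets and let a : s → A and b : t → A be families of elements of A. Then (∏_{i∈s} (1 − a_i X)) ⋆ (∏_{j∈t} (1 − b_j X)) = ∏_{(i,j)∈s×t} (1 − a_i b_j X) in 𝒜. In particular, (1 − aX) ⋆ (1 − bX) = 1 − abX for all a, b ∈ A. -/
open PowerSeries

/-- Formal exponential: for `F` with zero constant coefficient this is
`exp F = ∑ F^k / k!` (each coefficient is a finite sum). -/
noncomputable def pexp {A : Type*} [CommRing A] [Algebra ℚ A] (F : PowerSeries A) :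
    PowerSeries A :=
  PowerSeries.mk fun n =>
    ∑ k ∈ Finset.range (n + 1), ((k.factorial : ℚ)⁻¹) • (PowerSeries.coeff n (F ^ k))

/-- Formal logarithm: for `f` with constant coefficient `1` this is
`log f = ∑_{k≥1} (-1)^{k+1} (f-1)^k / k`; it is the inverse bijection of `pexp`
between `X·A[[X]]` and `𝒜 = 1 + X·A[[X]]`. -/
noncomputable def plog {A : Type*} [CommRing A] [Algebra ℚ A] (f : PowerSeries A) :
    PowerSeries A :=
  PowerSeries.mk fun n =>
    if n = 0 then 0 else
      ∑ k ∈ Finset.range (n + 1), (((-1 : ℚ) ^ (k + 1)) / k) • (PowerSeries.coeff n ((f - 1) ^ k))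

/-- The eñe product: if `f = exp (∑_{i≥1} Fᵢ Xⁱ)` and `g = exp (∑_{i≥1} Gᵢ Xⁱ)` then
`f ⋆ g = exp (−∑_{i≥1} i·Fᵢ·Gᵢ·Xⁱ)`. -/
noncomputable def ene {A : Type*} [CommRing A] [Algebra ℚ A] (f g : PowerSeries A) :
    PowerSeries A :=
  pexp (PowerSeries.mk fun i =>
    -(i : A) * (PowerSeries.coeff i (plog f)) * (PowerSeries.coeff i (plog g)))

section Lemmas

variable {A : Type*} [CommRing A] [Algebra ℚ A]

set_option linter.unusedSectionVars false

lemma smul_eq_of_mul_natCast {x y : A} {n : ℕ} (hn : 0 < n) (h : y = x * (n : A)) :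
    x = ((n : ℚ))⁻¹ • y := by
  rw [h, mul_comm, Algebra.smul_def]
  have h2 : ((n : A)) = algebraMap ℚ A ((n : ℚ)) := by simp
  rw [h2, ← mul_assoc, ← map_mul,
    inv_mul_cancel₀ (by exact_mod_cast Nat.cast_ne_zero.mpr hn.ne')]
  simp

lemma pow_mul_deriv (F : PowerSeries A) (k n : ℕ) :
    coeff (n+1) (F ^ (k+1)) * ((n+1 : ℕ) : A) =
      coeff n (F ^ k * d⁄dX A F) * ((k+1 : ℕ) : A) := by
  have hD : d⁄dX A (F ^ (k+1)) = (k+1) • (F ^ k * d⁄dX A F) := by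
    rw [Derivation.leibniz_pow]
    simp [smul_eq_mul]
  have h1 := coeff_derivative (R := A) (F ^ (k+1)) n
  rw [hD, map_nsmul] at h1
  rw [nsmul_eq_mul] at h1
  push_cast at h1 ⊢
  linear_combination -h1

lemma coeff_pow_mul_deriv (F : PowerSeries A) (k n : ℕ) :
    coeff n (F ^ k * d⁄dX A F) =
      (((k+1 : ℕ) : ℚ))⁻¹ • (coeff (n+1) (F ^ (k+1)) * ((n+1 : ℕ) : A)) :=
  smul_eq_of_mul_natCast (Nat.succ_pos k) (pow_mul_deriv F k n)

set_option linter.unusedSectionVars false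


lemma coeff_pow_eq_zero {F : PowerSeries A} (hF : constantCoeff F = 0) {n k : ℕ} (h : n < k) :
    coeff n (F ^ k) = 0 := by
  have hX : (X : PowerSeries A) ^ k ∣ F ^ k := pow_dvd_pow_of_dvd (X_dvd_iff.mpr hF) k
  exact (X_pow_dvd_iff.mp hX) n h

lemma coeff_mul_congr {L M f : PowerSeries A} {n : ℕ}
    (h : ∀ m ≤ n, coeff m L = coeff m M) : coeff n (f * L) = coeff n (f * M) := by
  rw [coeff_mul, coeff_mul]
  refine Finset.sum_congr rfl fun p hp => ?_
  rw [Finset.HasAntidiagonal.mem_antidiagonal] at hp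
  rw [h p.2 (by omega)]

lemma deriv_pexp {F : PowerSeries A} (hF : constantCoeff F = 0) :
    d⁄dX A (pexp F) = pexp F * d⁄dX A F := by
  ext n
  set E : PowerSeries A := ∑ k ∈ Finset.range (n + 1), ((k.factorial : ℚ)⁻¹) • F ^ k with hE
  have hcoeffE : ∀ m ≤ n, coeff m (pexp F) = coeff m E := by
    intro m hm
    rw [hE, map_sum, pexp, coeff_mk]
    rw [Finset.sum_subset (Finset.range_subset_range.mpr (by omega : m + 1 ≤ n + 1))]
    · exact Finset.sum_congr rfl fun k _ => by rw [coeff_smul]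
    · intro k hk hk2
      rw [Finset.mem_range, not_lt] at hk2
      rw [coeff_pow_eq_zero hF (by omega), smul_zero]
  calc coeff n (d⁄dX A (pexp F))
      = coeff (n+1) (pexp F) * ((n+1 : ℕ) : A) := by rw [coeff_derivative]; push_cast; ring
    _ = ∑ k ∈ Finset.range (n+2), ((k.factorial : ℚ)⁻¹) •
          (coeff (n+1) (F ^ k) * ((n+1 : ℕ) : A)) := by
        rw [pexp, coeff_mk, Finset.sum_mul]
        exact Finset.sum_congr rfl fun k _ => (smul_mul_assoc _ _ _)
    _ = ∑ k ∈ Finset.range (n+1), (((k+1).factorial : ℚ)⁻¹) •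
          (coeff (n+1) (F ^ (k+1)) * ((n+1 : ℕ) : A)) := by
        rw [Finset.sum_range_succ']
        simp
    _ = ∑ k ∈ Finset.range (n+1), ((k.factorial : ℚ)⁻¹) • coeff n (F ^ k * d⁄dX A F) := by
        refine Finset.sum_congr rfl fun k _ => ?_
        rw [coeff_pow_mul_deriv, smul_smul, Nat.factorial_succ]
        push_cast
        rw [mul_inv]
        ring_nf
    _ = coeff n (E * d⁄dX A F) := by
        rw [hE, Finset.sum_mul, map_sum]
        exact Finset.sum_congr rfl fun k _ => by rw [smul_mul_assoc, coeff_smul]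
    _ = coeff n (d⁄dX A F * E) := by rw [mul_comm]
    _ = coeff n (d⁄dX A F * pexp F) := (coeff_mul_congr hcoeffE).symm
    _ = coeff n (pexp F * d⁄dX A F) := by rw [mul_comm]


lemma neg_pow_smul (u v : PowerSeries A) (k : ℕ) :
    (-u) ^ k * v = ((-1 : ℚ) ^ k) • (u ^ k * v) := by
  rw [neg_pow, mul_assoc, Algebra.smul_def, map_pow, map_neg, map_one]

lemma mul_deriv_plog {f : PowerSeries A} (hf : constantCoeff f = 1) :
    f * d⁄dX A (plog f) = d⁄dX A f := by
  set u : PowerSeries A := f - 1 with hu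
  have hu0 : constantCoeff u = 0 := by rw [hu, map_sub, hf, map_one, sub_self]
  have hfu : f = 1 + u := by rw [hu]; ring
  ext n
  set S : PowerSeries A := ∑ k ∈ Finset.range (n + 1), (-u) ^ k with hS
  have key : ∀ m ≤ n, coeff m (d⁄dX A (plog f)) = coeff m (S * d⁄dX A u) := by
    intro m hm
    calc coeff m (d⁄dX A (plog f))
        = ∑ k ∈ Finset.range (m+2), (((-1 : ℚ) ^ (k + 1)) / k) •
            (coeff (m+1) (u ^ k) * ((m+1 : ℕ) : A)) := by
          rw [coeff_derivative, plog, coeff_mk, if_neg (Nat.succ_ne_zero m), Finset.sum_mul]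
          push_cast
          exact Finset.sum_congr rfl fun k _ => (smul_mul_assoc _ _ _)
      _ = ∑ k ∈ Finset.range (m+1), (((-1 : ℚ) ^ (k + 2)) / (k+1)) •
            (coeff (m+1) (u ^ (k+1)) * ((m+1 : ℕ) : A)) := by
          rw [Finset.sum_range_succ']
          simp
      _ = ∑ k ∈ Finset.range (n+1), (((-1 : ℚ) ^ (k + 2)) / (k+1)) •
            (coeff (m+1) (u ^ (k+1)) * ((m+1 : ℕ) : A)) := by
          refine Finset.sum_subset (Finset.range_subset_range.mpr (by omega)) ?_
          intro k _ hk2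
          rw [Finset.mem_range, not_lt] at hk2
          rw [coeff_pow_eq_zero hu0 (by omega : m + 1 < k + 1), zero_mul, smul_zero]
      _ = ∑ k ∈ Finset.range (n+1), coeff m ((-u) ^ k * d⁄dX A u) := by
          refine Finset.sum_congr rfl fun k _ => ?_
          rw [neg_pow_smul, coeff_smul, coeff_pow_mul_deriv, smul_smul]
          congr 1
          push_cast
          rw [div_eq_mul_inv]
          ring
      _ = coeff m (S * d⁄dX A u) := by rw [hS, Finset.sum_mul, map_sum]
  have step2 : coeff n (f * d⁄dX A (plog f)) = coeff n (f * (S * d⁄dX A u)) :=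
    coeff_mul_congr key
  have hDf : d⁄dX A f = d⁄dX A u := by
    rw [hu, map_sub, Derivation.map_one_eq_zero, sub_zero]
  rw [step2, hDf]
  nth_rewrite 1 [hfu]
  have geom : (1 + u) * S = 1 - (-u) ^ (n+1) := by
    have h3 := geom_sum_mul (-u) (n+1)
    rw [hS]
    linear_combination -h3
  rw [← mul_assoc, geom, sub_mul, one_mul, map_sub]
  have hzero : coeff n ((-u) ^ (n+1) * d⁄dX A u) = 0 := by
    have hX : (X : PowerSeries A) ^ (n+1) ∣ (-u) ^ (n+1) * d⁄dX A u :=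
      Dvd.dvd.mul_right (pow_dvd_pow_of_dvd (X_dvd_iff.mpr (by rw [map_neg, hu0, neg_zero])) _) _
    exact (X_pow_dvd_iff.mp hX) n (by omega)
  rw [hzero, sub_zero]

lemma coeff_succ_eq (g : PowerSeries A) (n : ℕ) :
    coeff (n+1) g = (((n+1 : ℕ) : ℚ))⁻¹ • coeff n (d⁄dX A g) :=
  smul_eq_of_mul_natCast (Nat.succ_pos n) (by rw [coeff_derivative]; push_cast; ring)

lemma ode_unique {P g h : PowerSeries A} (h0 : constantCoeff g = constantCoeff h)
    (hg : d⁄dX A g = P * g) (hh : d⁄dX A h = P * h) : g = h := by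
  ext n
  induction n using Nat.strong_induction_on with
  | _ n ih =>
    match n with
    | 0 => simpa [coeff_zero_eq_constantCoeff] using h0
    | n + 1 =>
      rw [coeff_succ_eq, coeff_succ_eq, hg, hh,
        coeff_mul_congr (f := P) (n := n) (fun m hm => ih m (by omega))]

lemma deriv_ext {g h : PowerSeries A} (h0 : constantCoeff g = constantCoeff h)
    (hd : d⁄dX A g = d⁄dX A h) : g = h := by
  ext n
  match n with
  | 0 => simpa [coeff_zero_eq_constantCoeff] using h0
  | n + 1 => rw [coeff_succ_eq, coeff_succ_eq, hd]

lemma constantCoeff_plog (f : PowerSeries A) : constantCoeff (plog f) = 0 := by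
  rw [← coeff_zero_eq_constantCoeff_apply, plog, coeff_mk, if_pos rfl]

lemma constantCoeff_pexp (F : PowerSeries A) : constantCoeff (pexp F) = 1 := by
  rw [← coeff_zero_eq_constantCoeff_apply, pexp, coeff_mk]
  simp

lemma pexp_plog {f : PowerSeries A} (hf : constantCoeff f = 1) : pexp (plog f) = f := by
  apply ode_unique (P := d⁄dX A (plog f))
  · rw [constantCoeff_pexp, hf]
  · rw [deriv_pexp (constantCoeff_plog f), mul_comm]
  · rw [← mul_deriv_plog hf, mul_comm]

lemma plog_mul {f g : PowerSeries A} (hf : constantCoeff f = 1)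
    (hg : constantCoeff g = 1) : plog (f * g) = plog f + plog g := by
  apply deriv_ext
  · rw [constantCoeff_plog, map_add, constantCoeff_plog, constantCoeff_plog, add_zero]
  · rw [map_add]
    have hfgu : IsUnit (f * g) := isUnit_iff_constantCoeff.mpr (by
      rw [map_mul, hf, hg, mul_one]; exact isUnit_one)
    apply hfgu.mul_left_cancel
    rw [mul_add]
    calc (f * g) * d⁄dX A (plog (f * g)) = d⁄dX A (f * g) := mul_deriv_plog (by rw [map_mul, hf, hg, mul_one])
      _ = d⁄dX A f * g + f * d⁄dX A g := by
          rw [Derivation.leibniz, smul_eq_mul, smul_eq_mul]; ring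
      _ = (f * d⁄dX A (plog f)) * g + f * (g * d⁄dX A (plog g)) := by
          rw [mul_deriv_plog hf, mul_deriv_plog hg]
      _ = f * g * d⁄dX A (plog f) + f * g * d⁄dX A (plog g) := by ring

lemma plog_one : plog (1 : PowerSeries A) = 0 := by
  ext n
  rw [plog, coeff_mk, map_zero]
  split_ifs with h
  · rfl
  · refine Finset.sum_eq_zero fun k _ => ?_
    match k with
    | 0 => simp
    | k + 1 => simp [zero_pow (Nat.succ_ne_zero k)]

lemma plog_prod {ι : Type*} (s : Finset ι) (f : ι → PowerSeries A)
    (hf : ∀ i ∈ s, constantCoeff (f i) = 1) :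
    plog (∏ i ∈ s, f i) = ∑ i ∈ s, plog (f i) := by
  induction s using Finset.cons_induction with
  | empty => simpa using plog_one
  | cons i s hi ih =>
    rw [Finset.prod_cons, plog_mul (hf i (Finset.mem_cons_self i s))
      (by rw [map_prod]; exact Finset.prod_eq_one fun j hj => hf j (Finset.mem_cons_of_mem hj)),
      ih (fun j hj => hf j (Finset.mem_cons_of_mem hj)), Finset.sum_cons]

lemma coeff_plog_linear (c : A) (n : ℕ) :
    coeff n (plog (1 - C c * X)) = (-(n : ℚ)⁻¹) • c ^ n := by
  rw [plog, coeff_mk]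
  rcases Nat.eq_zero_or_pos n with h0 | hpos
  · subst h0; simp
  · rw [if_neg hpos.ne']
    have hterm : ∀ k, coeff n ((1 - C c * X - 1) ^ k) = if n = k then (-c) ^ n else 0 := by
      intro k
      have hu : (1 - C c * X) - 1 = C (-c) * X := by rw [map_neg]; ring
      rw [hu, mul_pow, ← map_pow, coeff_C_mul, coeff_X_pow]
      split_ifs with h
      · subst h; simp
      · simp
    rw [Finset.sum_congr rfl (fun k _ => by rw [hterm k])]
    rw [Finset.sum_eq_single n (fun k _ hk => by rw [if_neg (Ne.symm hk), smul_zero])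
      (fun h => absurd (Finset.self_mem_range_succ n) h), if_pos rfl]
    have hneg : (-c) ^ n = ((-1 : ℚ) ^ n) • c ^ n := by
      rw [neg_pow, Algebra.smul_def, map_pow, map_neg, map_one]
    rw [hneg, smul_smul]
    congr 1
    rw [div_mul_eq_mul_div, ← pow_add, Odd.neg_one_pow ⟨n, by ring⟩]
    rw [neg_div, one_div]

lemma key {α : Type*} (w : Finset α) (v : α → A) (n : ℕ) :
    coeff n (plog (∏ i ∈ w, (1 - C (v i) * X))) = (-(n : ℚ)⁻¹) • ∑ i ∈ w, (v i) ^ n := by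
  have hc : ∀ (c : A), constantCoeff (1 - C c * X) = 1 := fun c => by simp
  rw [plog_prod w _ (fun i _ => hc _), map_sum,
    Finset.sum_congr rfl (fun i _ => coeff_plog_linear (v i) n), ← Finset.smul_sum]

lemma ene_prod {ι κ : Type*} (s : Finset ι) (t : Finset κ) (a : ι → A) (b : κ → A) :
    ene (∏ i ∈ s, (1 - C (a i) * X)) (∏ j ∈ t, (1 - C (b j) * X)) =
      ∏ ij ∈ s ×ˢ t, (1 - C (a ij.1 * b ij.2) * X) := by
  have hc : ∀ (c : A), constantCoeff (1 - C c * X) = 1 := fun c => by simp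
  have hcR : constantCoeff (∏ ij ∈ s ×ˢ t, (1 - C (a ij.1 * b ij.2) * X)) = 1 := by
    rw [map_prod]; exact Finset.prod_eq_one fun i _ => hc _
  have hmk : (PowerSeries.mk fun i =>
      -(i : A) * (coeff i (plog (∏ i ∈ s, (1 - C (a i) * X)))) *
        (coeff i (plog (∏ j ∈ t, (1 - C (b j) * X))))) =
      plog (∏ ij ∈ s ×ˢ t, (1 - C (a ij.1 * b ij.2) * X)) := by
    ext n
    rw [coeff_mk, key s a n, key t b n, key (s ×ˢ t) (fun ij => a ij.1 * b ij.2) n]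
    have hprod : ∑ ij ∈ s ×ˢ t, (a ij.1 * b ij.2) ^ n =
        (∑ i ∈ s, (a i) ^ n) * (∑ j ∈ t, (b j) ^ n) := by
      rw [Finset.sum_mul_sum, Finset.sum_product]
      exact Finset.sum_congr rfl fun i _ => Finset.sum_congr rfl fun j _ => mul_pow _ _ _
    rw [hprod]
    rcases Nat.eq_zero_or_pos n with h0 | hpos
    · subst h0; simp
    · have hcast : -(n : A) = algebraMap ℚ A (-(n : ℚ)) := by simp
      rw [hcast, ← Algebra.smul_def, smul_smul, smul_mul_assoc, mul_smul_comm, smul_smul]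
      congr 1
      have hn : (n : ℚ) ≠ 0 := Nat.cast_ne_zero.mpr hpos.ne'
      field_simp
  rw [ene, hmk, pexp_plog hcR]

end Lemmas

/-- For finite families `a : s → A`, `b : t → A`:
`(∏ᵢ (1 − aᵢX)) ⋆ (∏ⱼ (1 − bⱼX)) = ∏_{(i,j)} (1 − aᵢbⱼX)`;
in particular `(1 − aX) ⋆ (1 − bX) = 1 − abX`. -/
theorem ene_prod_linear_factors {A : Type*} [CommRing A] [Algebra ℚ A]
    {ι κ : Type*} (s : Finset ι) (t : Finset κ) (a : ι → A) (b : κ → A) :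
    ene (∏ i ∈ s, (1 - PowerSeries.C (a i) * PowerSeries.X))
        (∏ j ∈ t, (1 - PowerSeries.C (b j) * PowerSeries.X)) =
      ∏ ij ∈ s ×ˢ t, (1 - PowerSeries.C (a ij.1 * b ij.2) * PowerSeries.X) ∧
    ∀ c d : A,
      ene (1 - PowerSeries.C c * PowerSeries.X)
          (1 - PowerSeries.C d * PowerSeries.X) =
        1 - PowerSeries.C (c * d) * PowerSeries.X := by
  refine ⟨ene_prod s t a b, fun c d => ?_⟩
  have h := ene_prod ({0} : Finset ℕ) ({0} : Finset ℕ) (fun _ => c) (fun _ => d)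
  simpa using h
end

section
/- Let N ≥ 1 and let f = exp(Σ_{i≥1} F_i X^i) ∈ 𝒜. Then E_N ⋆ f = exp(Σ_{i>N} F_i X^i) = f · exp(−Σ_{i=1}^{N} F_i X^i); that is, eñe multiplication by the Weierstrass factor E_N removes the exponential coefficients of order ≤ N: E_N ⋆ f = f · T_N^e(1/f), where T_N^e(exp(Σ_{i≥1} H_i X^i)) := exp(Σ_{i=1}^{N} H_i X^i) is the exponential N-truncation. -/
open PowerSeries

/-- The Weierstrass factor `E_N = (1−X)·exp(X + X²/2 + ⋯ + X^N/N)
= exp(−∑_{i>N} Xⁱ/i)`. -/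
noncomputable def weierstrassE {A : Type*} [CommRing A] [Algebra ℚ A] (N : ℕ) :
    PowerSeries A :=
  pexp (PowerSeries.mk fun i => if N < i then ((i : ℚ)⁻¹) • (-1 : A) else 0)

section EneAuxSection
open Finset
namespace EneAux

set_option linter.unusedSectionVars false

variable {A : Type*} [CommRing A] [Algebra ℚ A]

lemma coeff_derivFun' (f : PowerSeries A) (n : ℕ) :
    coeff n (derivativeFun f) = coeff (n + 1) f * (n + 1) :=
  coeff_derivative f n

lemma qsmul_cancel {q : ℚ} (hq : q ≠ 0) {a b : A} (h : q • a = q • b) : a = b := by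
  have := congrArg (fun x => q⁻¹ • x) h
  simpa [smul_smul, inv_mul_cancel₀ hq] using this

lemma coeff_pow_mul_zero {m : PowerSeries A} (hm : constantCoeff m = 0)
    (g : PowerSeries A) {b j : ℕ} (h : b < j) : coeff b (m ^ j * g) = 0 := by
  have hd : (X : PowerSeries A) ^ j ∣ m ^ j * g :=
    dvd_mul_of_dvd_left (pow_dvd_pow_of_dvd (X_dvd_iff.mpr hm) j) g
  exact X_pow_dvd_iff.mp hd b h

lemma coeff_pow_zero {m : PowerSeries A} (hm : constantCoeff m = 0)
    {b j : ℕ} (h : b < j) : coeff b (m ^ j) = 0 := by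
  simpa using coeff_pow_mul_zero hm 1 h

lemma coeff_pexp {F : PowerSeries A} (hF : constantCoeff F = 0) {n M : ℕ} (h : n < M) :
    coeff n (pexp F) = ∑ k ∈ range M, ((k.factorial : ℚ)⁻¹) • coeff n (F ^ k) := by
  rw [pexp, coeff_mk]
  apply Finset.sum_subset (Finset.range_subset_range.mpr h)
  intro k _ hk
  rw [coeff_pow_zero hF (by simpa using hk), smul_zero]

lemma constantCoeff_pexp (F : PowerSeries A) : constantCoeff (pexp F) = 1 := by
  rw [← coeff_zero_eq_constantCoeff_apply, pexp, coeff_mk]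
  simp

lemma derivFun_pow (F : PowerSeries A) (j : ℕ) :
    derivativeFun (F ^ (j + 1)) = (j + 1) • (F ^ j * derivativeFun F) := by
  induction j with
  | zero => simp
  | succ j ih =>
    rw [pow_succ, derivativeFun_mul, ih, smul_eq_mul, smul_eq_mul, mul_smul_comm,
      succ_nsmul]
    ring_nf

set_option linter.unusedSectionVars false

lemma pexp_deriv {F : PowerSeries A} (hF : constantCoeff F = 0) :
    derivativeFun (pexp F) = derivativeFun F * pexp F := by
  ext n
  rw [coeff_derivFun']
  have hL : coeff (n + 1) (pexp F) * ((n : A) + 1) =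
      ∑ j ∈ range (n + 1), ((j.factorial : ℚ)⁻¹) • coeff n (F ^ j * derivativeFun F) := by
    rw [coeff_pexp hF (Nat.lt_succ_self (n+1)), Finset.sum_mul]
    have : ∀ k ∈ range (n + 2),
        ((k.factorial : ℚ)⁻¹) • coeff (n+1) (F ^ k) * ((n : A) + 1) =
        ((k.factorial : ℚ)⁻¹) • coeff n (derivativeFun (F ^ k)) := by
      intro k _
      rw [smul_mul_assoc, coeff_derivFun']
    rw [Finset.sum_congr rfl this, Finset.sum_range_succ']
    simp only [derivFun_pow, map_nsmul]
    rw [pow_zero, derivativeFun_one]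
    simp only [map_zero, smul_zero, add_zero]
    apply Finset.sum_congr rfl
    intro j _
    rw [← Nat.cast_smul_eq_nsmul ℚ, smul_smul, Nat.factorial_succ]
    congr 1
    push_cast
    rw [mul_comm]
    field_simp
  rw [hL, coeff_mul]
  have : ∀ p ∈ antidiagonal n, coeff p.1 (derivativeFun F) * coeff p.2 (pexp F) =
      ∑ k ∈ range (n + 1), ((k.factorial : ℚ)⁻¹) •
        (coeff p.1 (derivativeFun F) * coeff p.2 (F ^ k)) := by
    intro p hp
    have hp2 : p.2 ≤ n := by
      have := Finset.HasAntidiagonal.mem_antidiagonal.mp hp; omega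
    rw [coeff_pexp hF (Nat.lt_succ_of_le hp2), Finset.mul_sum]
    exact Finset.sum_congr rfl fun k _ => (mul_smul_comm _ _ _)
  rw [Finset.sum_congr rfl this, Finset.sum_comm]
  apply Finset.sum_congr rfl
  intro k _
  rw [← Finset.smul_sum, ← coeff_mul, mul_comm]

lemma derivFun_sub_one (f : PowerSeries A) : derivativeFun (f - 1) = derivativeFun f := by
  ext n
  rw [coeff_derivFun', coeff_derivFun', map_sub]
  rw [coeff_one, if_neg (Nat.succ_ne_zero n)]
  ring

lemma telescope (m : PowerSeries A) (n : ℕ) :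
    ∑ j ∈ range (n + 1), ((-1 : ℚ) ^ j) • ((1 + m) * m ^ j) =
      1 + ((-1 : ℚ) ^ n) • m ^ (n + 1) := by
  induction n with
  | zero => simp [mul_add, add_mul]
  | succ n ih =>
    rw [Finset.sum_range_succ, ih, pow_succ]
    rw [add_mul, one_mul, smul_add, ← pow_succ]
    rw [show m * m ^ (n+1) = m ^ (n+1+1) from (pow_succ' m (n+1)).symm,
      pow_succ (-1 : ℚ) n]
    simp only [mul_neg, mul_one, neg_smul]
    abel

lemma coeff_derivFun_plog {f : PowerSeries A} (hf : constantCoeff f = 1) (n : ℕ) :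
    coeff n (derivativeFun (plog f)) =
      ∑ j ∈ range (n + 1), ((-1 : ℚ) ^ j) • coeff n ((f - 1) ^ j * derivativeFun f) := by
  have hm : constantCoeff (f - 1) = 0 := by simp [hf]
  rw [coeff_derivFun', plog, coeff_mk, if_neg (Nat.succ_ne_zero n), Finset.sum_mul]
  have : ∀ k ∈ range (n + 2),
      (((-1 : ℚ) ^ (k + 1) / k) • coeff (n+1) ((f - 1) ^ k)) * ((n : A) + 1) =
      ((-1 : ℚ) ^ (k + 1) / k) • coeff n (derivativeFun ((f - 1) ^ k)) := by
    intro k _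
    rw [smul_mul_assoc, coeff_derivFun']
  rw [Finset.sum_congr rfl this, Finset.sum_range_succ']
  simp only [derivFun_pow, map_nsmul]
  rw [pow_zero, derivativeFun_one]
  simp only [map_zero, smul_zero, add_zero]
  apply Finset.sum_congr rfl
  intro j _
  rw [← Nat.cast_smul_eq_nsmul ℚ, smul_smul, derivFun_sub_one]
  congr 1
  rw [pow_succ ((-1:ℚ)) (j+1), pow_succ ((-1:ℚ)) j]
  have : ((j : ℚ) + 1) ≠ 0 := by positivity
  field_simp

lemma plog_deriv {f : PowerSeries A} (hf : constantCoeff f = 1) :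
    f * derivativeFun (plog f) = derivativeFun f := by
  have hm : constantCoeff (f - 1) = 0 := by simp [hf]
  ext n
  rw [coeff_mul]
  have step : ∀ p ∈ antidiagonal n, coeff p.1 f * coeff p.2 (derivativeFun (plog f)) =
      ∑ j ∈ range (n + 1), ((-1 : ℚ) ^ j) •
        (coeff p.1 f * coeff p.2 ((f - 1) ^ j * derivativeFun f)) := by
    intro p hp
    have hp2 : p.2 ≤ n := by have := Finset.HasAntidiagonal.mem_antidiagonal.mp hp; omega
    rw [coeff_derivFun_plog hf,
      Finset.sum_subset (Finset.range_subset_range.mpr (Nat.succ_le_succ hp2))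
        (fun j _ hj => by
          rw [coeff_pow_mul_zero hm _ (by simpa using hj), smul_zero]),
      Finset.mul_sum]
    exact Finset.sum_congr rfl fun k _ => (mul_smul_comm _ _ _)
  rw [Finset.sum_congr rfl step, Finset.sum_comm]
  have : ∀ j ∈ range (n + 1),
      (∑ p ∈ antidiagonal n, ((-1 : ℚ) ^ j) •
        (coeff p.1 f * coeff p.2 ((f - 1) ^ j * derivativeFun f))) =
      coeff n ((((-1 : ℚ) ^ j) • ((1 + (f - 1)) * (f - 1) ^ j)) * derivativeFun f) := by
    intro j _
    rw [← Finset.smul_sum, ← coeff_mul, smul_mul_assoc, coeff_smul]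
    congr 2
    ring_nf
  rw [Finset.sum_congr rfl this, ← map_sum, ← Finset.sum_mul, telescope, add_mul, one_mul,
    map_add, smul_mul_assoc, coeff_smul, coeff_pow_mul_zero hm _ (Nat.lt_succ_self n),
    smul_zero, add_zero]

lemma mul_natA_cancel {n : ℕ} {a b : A} (h : a * ((n : A) + 1) = b * ((n : A) + 1)) :
    a = b := by
  apply qsmul_cancel (q := (n : ℚ) + 1) (by positivity)
  have hc : ((n : A) + 1) = algebraMap ℚ A ((n : ℚ) + 1) := by
    push_cast
    simp
  rw [Algebra.smul_def, Algebra.smul_def, ← hc, mul_comm _ a, mul_comm _ b]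
  exact h

lemma ext_deriv {u v : PowerSeries A} (hd : derivativeFun u = derivativeFun v)
    (h0 : coeff 0 u = coeff 0 v) : u = v := by
  ext n
  cases n with
  | zero => exact h0
  | succ n =>
    have := congrArg (coeff n) hd
    rw [coeff_derivFun', coeff_derivFun'] at this
    exact mul_natA_cancel this

lemma ode_unique {p u v : PowerSeries A} (hu : derivativeFun u = p * u)
    (hv : derivativeFun v = p * v) (h0 : coeff 0 u = coeff 0 v) : u = v := by
  ext n
  induction n using Nat.strong_induction_on with
  | _ n ih =>
    match n with
    | 0 => exact h0
    | Nat.succ n =>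
      have hu' := congrArg (coeff n) hu
      have hv' := congrArg (coeff n) hv
      rw [coeff_derivFun', coeff_mul] at hu' hv'
      apply mul_natA_cancel
      rw [hu', hv']
      apply Finset.sum_congr rfl
      intro q hq
      have hq2 : q.2 ≤ n := by have := Finset.HasAntidiagonal.mem_antidiagonal.mp hq; omega
      rw [ih q.2 (by omega)]

lemma plog_pexp {F : PowerSeries A} (hF : constantCoeff F = 0) : plog (pexp F) = F := by
  have h1 : constantCoeff (pexp F) = 1 := constantCoeff_pexp F
  have hd := plog_deriv h1
  rw [pexp_deriv hF, mul_comm (derivativeFun F) (pexp F)] at hd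
  have hunit : IsUnit (pexp F) := isUnit_iff_constantCoeff.mpr (by rw [h1]; exact isUnit_one)
  have hdd : derivativeFun (plog (pexp F)) = derivativeFun F :=
    hunit.mul_left_cancel hd
  apply ext_deriv hdd
  rw [plog, coeff_mk, if_pos rfl, ← coeff_zero_eq_constantCoeff_apply] at *
  rw [hF]

lemma pexp_add {F G : PowerSeries A} (hF : constantCoeff F = 0)
    (hG : constantCoeff G = 0) : pexp (F + G) = pexp F * pexp G := by
  apply ode_unique (p := derivativeFun F + derivativeFun G)
  · rw [← derivativeFun_add]
    exact pexp_deriv (by rw [map_add, hF, hG, add_zero])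
  · rw [derivativeFun_mul, pexp_deriv hF, pexp_deriv hG, smul_eq_mul, smul_eq_mul]
    ring
  · rw [coeff_zero_eq_constantCoeff_apply, coeff_zero_eq_constantCoeff_apply,
      map_mul, constantCoeff_pexp, constantCoeff_pexp, constantCoeff_pexp, mul_one]


end EneAux
end EneAuxSection

open Finset EneAux in
/-- For `N ≥ 1` and `f = exp(∑_{i≥1} Fᵢ Xⁱ) ∈ 𝒜`:
`E_N ⋆ f = exp(∑_{i>N} Fᵢ Xⁱ) = f · exp(−∑_{i=1}^N Fᵢ Xⁱ) = f · T_N^e(1/f)`. -/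
theorem ene_weierstrass_truncation {A : Type*} [CommRing A] [Algebra ℚ A]
    (N : ℕ) (hN : 1 ≤ N) (F : ℕ → A) (hF0 : F 0 = 0) :
    ene (weierstrassE N) (pexp (PowerSeries.mk F)) =
      pexp (PowerSeries.mk fun i => if N < i then F i else 0) ∧
    ene (weierstrassE N) (pexp (PowerSeries.mk F)) =
      pexp (PowerSeries.mk F) *
        pexp (PowerSeries.mk fun i => if i ≤ N then -F i else 0) := by
  have hW0 : constantCoeff (PowerSeries.mk fun i =>
      if N < i then ((i : ℚ)⁻¹) • (-1 : A) else 0) = 0 := by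
    rw [← coeff_zero_eq_constantCoeff_apply, coeff_mk]
    simp
  have hF0' : constantCoeff (PowerSeries.mk F) = 0 := by
    rw [← coeff_zero_eq_constantCoeff_apply, coeff_mk]
    exact hF0
  have hneg0 : constantCoeff (PowerSeries.mk fun i => if i ≤ N then -F i else 0) = 0 := by
    rw [← coeff_zero_eq_constantCoeff_apply, coeff_mk, if_pos (Nat.zero_le N), hF0, neg_zero]
  have key : ene (weierstrassE N) (pexp (PowerSeries.mk F)) =
      pexp (PowerSeries.mk fun i => if N < i then F i else 0) := by
    rw [ene, weierstrassE, plog_pexp hW0, plog_pexp hF0']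
    refine congrArg pexp ?_
    ext i
    simp only [coeff_mk]
    by_cases hi : N < i
    · rw [if_pos hi, if_pos hi]
      have hi0 : (i : ℚ) ≠ 0 := Nat.cast_ne_zero.mpr (by omega)
      have h1 : -(i : A) * ((i : ℚ)⁻¹ • (-1 : A)) = 1 := by
        rw [mul_smul_comm, neg_mul_neg, mul_one,
          show ((i : A)) = algebraMap ℚ A ((i : ℚ)) by simp,
          Algebra.smul_def, ← map_mul, inv_mul_cancel₀ hi0, map_one]
      rw [h1, one_mul]
    · rw [if_neg hi, if_neg hi]
      simp
  refine ⟨key, ?_⟩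
  rw [key, show (PowerSeries.mk fun i => if N < i then F i else 0) =
      PowerSeries.mk F + PowerSeries.mk (fun i => if i ≤ N then -F i else 0) from ?_,
    pexp_add hF0' hneg0]
  ext i
  rw [map_add, coeff_mk, coeff_mk, coeff_mk]
  by_cases hi : i ≤ N
  · rw [if_pos hi, if_neg (by omega), add_neg_cancel]
  · rw [if_neg hi, if_pos (by omega), add_zero]
end
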